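/- Let n ≥ 2 and 1 ≤ k ≤ n − 1. Let ψ_k : (Fin n → Bool) → ℝ be the unit vector with ψ_k(s) = 1/√C(n,k) if s has exactly k true entries and ψ_k(s) = 0 otherwise, and let M be the real matrix indexed by (Fin n → Bool) with M(s,t) = 2 if s and t agree at every coordinate i ≥ 2 and ((s(0), s(1)) = (false, true) and (t(0), t(1)) = (true, false), or (s(0), s(1)) = (true, false) and (t(0), t(1)) = (false, true)), and M(s,t) = 0 otherwise. Then Σ_{s,t} ψ_k(s)·M(s,t)·ψ_k(t) ≥ 4/n. In particular this quantity decays at most polynomially (in fact at most linearly) in the number of qubits n, uniformly over all Hamming weights 1 ≤ k ≤ n − 1. -/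

import Mathlib

open Finset in
lemma count_aux (n k : ℕ) (hk1 : 1 ≤ k) (a b : Fin n) (hab : a ≠ b) :
    (Finset.univ.filter fun s : Fin n → Bool =>
      (Finset.univ.filter fun i => s i = true).card = k ∧ s a = false ∧ s b = true).card
      = (n - 2).choose (k - 1) := by
  classical
  have hcard : ((Finset.univ.erase a).erase b).card = n - 2 := by
    rw [Finset.card_erase_of_mem (by simp [hab.symm]), Finset.card_erase_of_mem (by simp)]
    simp; omega
  rw [← hcard, ← Finset.card_powersetCard (k-1)]
  apply Finset.card_bij' (fun s _ => (Finset.univ.filter fun i => s i = true).erase b)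
    (fun T _ => fun i => decide (i ∈ insert b T))
  · intro s hs
    simp only [Finset.mem_filter, Finset.mem_univ, true_and] at hs
    obtain ⟨hw, ha, hb⟩ := hs
    rw [Finset.mem_powersetCard]
    constructor
    · intro x hx
      simp only [Finset.mem_erase, Finset.mem_filter, Finset.mem_univ, true_and] at hx ⊢
      refine ⟨hx.1, ?_, trivial⟩
      rintro rfl
      rw [ha] at hx
      exact absurd hx.2 (by simp)
    · rw [Finset.card_erase_of_mem (by simp [hb]), hw]
  · intro T hT
    rw [Finset.mem_powersetCard] at hT
    obtain ⟨hsub, hcardT⟩ := hT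
    have hbT : b ∉ T := fun h => by have := hsub h; simp at this
    have haT : a ∉ insert b T := by
      simp only [Finset.mem_insert]
      rintro (rfl | h)
      · exact hab rfl
      · have := hsub h; simp at this
    simp only [Finset.mem_filter, Finset.mem_univ, true_and]
    refine ⟨?_, by simp [haT], by simp⟩
    have h1 : (Finset.univ.filter fun i => decide (i ∈ insert b T) = true) = insert b T := by
      ext i; simp
    rw [h1, Finset.card_insert_of_notMem hbT, hcardT]
    omega
  · intro s hs
    simp only [Finset.mem_filter, Finset.mem_univ, true_and] at hs
    obtain ⟨hw, ha, hb⟩ := hs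
    have h1 : insert b ((Finset.univ.filter fun i => s i = true).erase b)
        = Finset.univ.filter fun i => s i = true :=
      Finset.insert_erase (by simp [hb])
    funext i
    rw [h1]
    simp
  · intro T hT
    rw [Finset.mem_powersetCard] at hT
    have hbT : b ∉ T := fun h => by have := hT.1 h; simp at this
    have h1 : (Finset.univ.filter fun i => decide (i ∈ insert b T) = true) = insert b T := by
      ext i; simp
    rw [h1, Finset.erase_insert hbT]

lemma choose_le_aux (n k : ℕ) (hn : 2 ≤ n) (hk1 : 1 ≤ k) (hk2 : k ≤ n - 1) :
    n.choose k ≤ n * (n - 2).choose (k - 1) := by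
  have e1 : n * (n-1).choose (k-1) = n.choose k * k := by
    have h := Nat.add_one_mul_choose_eq (n-1) (k-1)
    rw [Nat.sub_add_cancel (by omega), Nat.sub_add_cancel hk1] at h
    exact h
  have e2 : (n-2).choose (k-1) * (n-1) = (n-1).choose (k-1) * (n - k) := by
    have h := Nat.choose_mul_succ_eq (n-2) (k-1)
    rw [show n - 2 + 1 = n - 1 by omega, show n - 1 - (k-1) = n - k by omega] at h
    exact h
  have e3 : n - 1 ≤ k * (n - k) := by
    have h1 : 1 ≤ n - k := by omega
    calc n - 1 = (n - k) + (k - 1) := by omega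
    _ ≤ (n - k) + (k - 1) * (n - k) := by
        exact Nat.add_le_add_left (Nat.le_mul_of_pos_right _ (by omega)) _
    _ = (k - 1 + 1) * (n - k) := by rw [Nat.add_mul, Nat.one_mul, Nat.add_comm]
    _ = k * (n - k) := by rw [Nat.sub_add_cancel hk1]
  have h7 : k * (n-k) * n.choose k = (n-1) * (n * (n-2).choose (k-1)) := by
    calc k * (n-k) * n.choose k = (n.choose k * k) * (n - k) := by ring
    _ = (n * (n-1).choose (k-1)) * (n-k) := by rw [e1]
    _ = n * ((n-1).choose (k-1) * (n-k)) := by ring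
    _ = n * ((n-2).choose (k-1) * (n-1)) := by rw [e2]
    _ = (n-1) * (n * (n-2).choose (k-1)) := by ring
  have h6 : (n-1) * n.choose k ≤ (n-1) * (n * (n-2).choose (k-1)) := by
    calc (n-1) * n.choose k ≤ (k * (n-k)) * n.choose k := Nat.mul_le_mul_right _ e3
    _ = (n-1) * (n * (n-2).choose (k-1)) := h7
  exact Nat.le_of_mul_le_mul_left h6 (by omega)

theorem stmt_6 (n k : ℕ) (hn : 2 ≤ n) (hk1 : 1 ≤ k) (hk2 : k ≤ n - 1)
    (ψ : (Fin n → Bool) → ℝ)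
    (hψ : ∀ s : Fin n → Bool,
      ψ s = if (Finset.univ.filter fun i => s i = true).card = k
        then 1 / Real.sqrt (Nat.choose n k) else 0)
    (M : (Fin n → Bool) → (Fin n → Bool) → ℝ)
    (hM : ∀ s t : Fin n → Bool, M s t =
      if (∀ i : Fin n, 2 ≤ (i : ℕ) → s i = t i) ∧
          ((s ⟨0, by omega⟩ = false ∧ s ⟨1, by omega⟩ = true ∧
            t ⟨0, by omega⟩ = true ∧ t ⟨1, by omega⟩ = false) ∨
           (s ⟨0, by omega⟩ = true ∧ s ⟨1, by omega⟩ = false ∧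
            t ⟨0, by omega⟩ = false ∧ t ⟨1, by omega⟩ = true))
        then 2 else 0) :
    4 / (n : ℝ) ≤ ∑ s : Fin n → Bool, ∑ t : Fin n → Bool, ψ s * M s t * ψ t := by
  classical
  have hkn : k ≤ n := by omega
  set i0 : Fin n := ⟨0, by omega⟩ with hi0def
  set i1 : Fin n := ⟨1, by omega⟩ with hi1def
  have hi01 : i0 ≠ i1 := by simp [hi0def, hi1def, Fin.ext_iff]
  set e : Equiv.Perm (Fin n) := Equiv.swap i0 i1 with hedef
  set σ : (Fin n → Bool) → (Fin n → Bool) := fun s i => s (e i) with hσdef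
  have hC : (0:ℝ) < (n.choose k : ℝ) := by exact_mod_cast Nat.choose_pos hkn
  -- M vanishes unless t = σ s
  have hM0 : ∀ s t : Fin n → Bool, t ≠ σ s → M s t = 0 := by
    intro s t ht
    rw [hM]
    apply if_neg
    rintro ⟨h1, h2⟩
    apply ht
    funext i
    rcases eq_or_ne i i0 with rfl | hI0
    · show t i0 = s (e i0)
      rw [show e i0 = i1 from Equiv.swap_apply_left _ _]
      rcases h2 with ⟨_, hb, hc, _⟩ | ⟨_, hb, hc, _⟩
      · rw [show t i0 = true from hc, show s i1 = true from hb]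
      · rw [show t i0 = false from hc, show s i1 = false from hb]
    rcases eq_or_ne i i1 with rfl | hI1
    · show t i1 = s (e i1)
      rw [show e i1 = i0 from Equiv.swap_apply_right _ _]
      rcases h2 with ⟨ha, _, _, hd⟩ | ⟨ha, _, _, hd⟩
      · rw [show t i1 = false from hd, show s i0 = false from ha]
      · rw [show t i1 = true from hd, show s i0 = true from ha]
    · show t i = s (e i)
      rw [show e i = i from Equiv.swap_apply_of_ne_of_ne hI0 hI1]
      have hv0 : (i : ℕ) ≠ 0 := fun h => hI0 (Fin.ext h)
      have hv1 : (i : ℕ) ≠ 1 := fun h => hI1 (Fin.ext h)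
      exact (h1 i (by omega)).symm
  -- collapse the inner sum
  have hsum1 : ∀ s : Fin n → Bool,
      ∑ t : Fin n → Bool, ψ s * M s t * ψ t = ψ s * M s (σ s) * ψ (σ s) := by
    intro s
    apply Finset.sum_eq_single
    · intro t _ ht
      rw [hM0 s t ht]; ring
    · intro h; exact absurd (Finset.mem_univ _) h
  -- σ preserves Hamming weight
  have hwt : ∀ s : Fin n → Bool,
      (Finset.univ.filter fun i => σ s i = true).card
        = (Finset.univ.filter fun i => s i = true).card := by
    intro s
    exact Finset.card_equiv e (fun i => by simp [hσdef])
  have hψσ : ∀ s, ψ (σ s) = ψ s := by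
    intro s; rw [hψ, hψ, hwt]
  -- value of M s (σ s)
  have hMσ : ∀ s : Fin n → Bool, M s (σ s) =
      if (s i0 = false ∧ s i1 = true) ∨ (s i1 = false ∧ s i0 = true) then 2 else 0 := by
    intro s
    rw [hM]
    by_cases h : (s i0 = false ∧ s i1 = true) ∨ (s i1 = false ∧ s i0 = true)
    · rw [if_pos h, if_pos]
      constructor
      · intro i hi
        show s i = s (e i)
        have hI0 : i ≠ i0 := by
          intro hh; subst hh; simp [hi0def] at hi
        have hI1 : i ≠ i1 := by
          intro hh; subst hh; simp [hi1def] at hi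
        rw [show e i = i from Equiv.swap_apply_of_ne_of_ne hI0 hI1]
      · have hσ0 : σ s i0 = s i1 := by
          show s (e i0) = s i1
          rw [show e i0 = i1 from Equiv.swap_apply_left _ _]
        have hσ1 : σ s i1 = s i0 := by
          show s (e i1) = s i0
          rw [show e i1 = i0 from Equiv.swap_apply_right _ _]
        rcases h with ⟨hf, ht⟩ | ⟨hf, ht⟩
        · left
          exact ⟨hf, ht, by rw [show σ s i0 = s i1 from hσ0]; exact ht,
            by rw [show σ s i1 = s i0 from hσ1]; exact hf⟩
        · right
          exact ⟨ht, hf, by rw [show σ s i0 = s i1 from hσ0]; exact hf,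
            by rw [show σ s i1 = s i0 from hσ1]; exact ht⟩
    · rw [if_neg h, if_neg]
      rintro ⟨-, h2⟩
      apply h
      rcases h2 with ⟨ha, hb, -, -⟩ | ⟨ha, hb, -, -⟩
      · exact Or.inl ⟨ha, hb⟩
      · exact Or.inr ⟨hb, ha⟩
  -- each term
  have hsq : Real.sqrt (n.choose k) * Real.sqrt (n.choose k) = (n.choose k : ℝ) :=
    Real.mul_self_sqrt (le_of_lt hC)
  have hterm : ∀ s : Fin n → Bool, ψ s * M s (σ s) * ψ (σ s) =
      if ((Finset.univ.filter fun i => s i = true).card = k ∧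
          ((s i0 = false ∧ s i1 = true) ∨ (s i1 = false ∧ s i0 = true)))
        then 2 / (n.choose k : ℝ) else 0 := by
    intro s
    rw [hψσ, hψ, hMσ]
    by_cases h1 : (Finset.univ.filter fun i => s i = true).card = k
    · by_cases h2 : (s i0 = false ∧ s i1 = true) ∨ (s i1 = false ∧ s i0 = true)
      · rw [if_pos h1, if_pos h2, if_pos ⟨h1, h2⟩]
        rw [show (1 / Real.sqrt (n.choose k)) * 2 * (1 / Real.sqrt (n.choose k))
            = 2 / (Real.sqrt (n.choose k) * Real.sqrt (n.choose k)) by ring, hsq]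
      · have hni : ¬((Finset.univ.filter fun i => s i = true).card = k ∧
            ((s i0 = false ∧ s i1 = true) ∨ (s i1 = false ∧ s i0 = true))) :=
          fun hh => h2 hh.2
        rw [if_pos h1, if_neg h2, if_neg hni]; ring
    · have hni : ¬((Finset.univ.filter fun i => s i = true).card = k ∧
          ((s i0 = false ∧ s i1 = true) ∨ (s i1 = false ∧ s i0 = true))) :=
        fun hh => h1 hh.1
      rw [if_neg h1, if_neg hni]; ring
  -- total
  have hcount : (Finset.univ.filter fun s : Fin n → Bool =>
      (Finset.univ.filter fun i => s i = true).card = k ∧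
        ((s i0 = false ∧ s i1 = true) ∨ (s i1 = false ∧ s i0 = true))).card
      = 2 * (n-2).choose (k-1) := by
    have hsplit : (Finset.univ.filter fun s : Fin n → Bool =>
        (Finset.univ.filter fun i => s i = true).card = k ∧
          ((s i0 = false ∧ s i1 = true) ∨ (s i1 = false ∧ s i0 = true)))
        = (Finset.univ.filter fun s : Fin n → Bool =>
            (Finset.univ.filter fun i => s i = true).card = k ∧ s i0 = false ∧ s i1 = true)
          ∪ (Finset.univ.filter fun s : Fin n → Bool =>
            (Finset.univ.filter fun i => s i = true).card = k ∧ s i1 = false ∧ s i0 = true) := by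
      ext s
      simp only [Finset.mem_filter, Finset.mem_union, Finset.mem_univ, true_and]
      tauto
    rw [hsplit, Finset.card_union_of_disjoint]
    · rw [count_aux n k hk1 i0 i1 hi01, count_aux n k hk1 i1 i0 hi01.symm]
      ring
    · rw [Finset.disjoint_left]
      intro s hs1 hs2
      simp only [Finset.mem_filter, Finset.mem_univ, true_and] at hs1 hs2
      rw [hs1.2.1] at hs2
      exact absurd hs2.2.2 (by simp)
  have hsum2 : ∑ s : Fin n → Bool, ∑ t : Fin n → Bool, ψ s * M s t * ψ t
      = (2 * (n-2).choose (k-1) : ℕ) * (2 / (n.choose k : ℝ)) := by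
    rw [Finset.sum_congr rfl (fun s _ => (hsum1 s).trans (hterm s))]
    rw [Finset.sum_ite, Finset.sum_const, Finset.sum_const_zero, add_zero, nsmul_eq_mul, hcount]
  rw [hsum2]
  have key : (n.choose k : ℝ) ≤ n * ((n-2).choose (k-1) : ℝ) := by
    have := choose_le_aux n k hn hk1 hk2
    exact_mod_cast this
  have hnR : (0:ℝ) < (n:ℝ) := by positivity
  rw [show ((2 * (n-2).choose (k-1) : ℕ) : ℝ) * (2 / (n.choose k : ℝ))
      = 4 * ((n-2).choose (k-1) : ℝ) / (n.choose k : ℝ) by push_cast; ring]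
  rw [div_le_div_iff₀ hnR hC]
  nlinarith [key]
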